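/- Let i < j be indices and set θ_{ij}^± = (1/√2)(e_{2i−1} ∧ e_{2j−1} ± e_{2i} ∧ e_{2j}) and ρ_{ij}^∓ = (1/√2)(e_{2i−1} ∧ e_{2j} ∓ e_{2i} ∧ e_{2j−1}). Suppose a p-form ω on V satisfies [θ_{ij}^+, ω] = [θ_{ij}^−, ω] = [ρ_{ij}^+, ω] = [ρ_{ij}^−, ω] = 0. Then there exist forms ω₁ (of degree p−4) and ω₂ (of degree p) satisfying e_{2i−1}⌟ω₁ = e_{2i}⌟ω₁ = e_{2j−1}⌟ω₁ = e_{2j}⌟ω₁ = 0 and e_{2i−1}⌟ω₂ = e_{2i}⌟ω₂ = e_{2j−1}⌟ω₂ = e_{2j}⌟ω₂ = 0, such that ω = e_{2i−1} ∧ e_{2i} ∧ e_{2j−1} ∧ e_{2j} ∧ ω₁ + ω₂. -/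

import Mathlib

open scoped BigOperators

namespace Paper

noncomputable section

/-- Coefficients of exterior forms w.r.t. the fixed orthonormal basis `e₁,…,e_q` of `V = ℝ^q`:
a form is identified with its family of coefficients indexed by subsets of `Fin q`. -/
abbrev Ext (q : ℕ) := Finset (Fin q) → ℝ

variable {q : ℕ}

/-- `(-1)^{#{j ∈ s | j < i}}` -/
def sgn (i : Fin q) (s : Finset (Fin q)) : ℝ := (-1 : ℝ) ^ (s.filter fun j => j < i).card

/-- Exterior multiplication by the basis vector `e_i`. -/
def wB (i : Fin q) (ω : Ext q) : Ext q := fun s =>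
  if i ∈ s then sgn i (s.erase i) * ω (s.erase i) else 0

/-- Interior product (contraction) with the basis vector `e_i`. -/
def iB (i : Fin q) (ω : Ext q) : Ext q := fun s =>
  if i ∈ s then 0 else sgn i s * ω (insert i s)

/-- The basis monomial `e_{i₁} ∧ ⋯ ∧ e_{i_p}`, for `s = {i₁ < ⋯ < i_p}`. -/
def bF (s : Finset (Fin q)) : Ext q := fun t => if t = s then 1 else 0

/-- The basis vector `e_i` of `V = ℝ^q`. -/
def eB (i : Fin q) : Fin q → ℝ := Pi.single i 1

/-- Exterior multiplication by the vector `X ∈ V`. -/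
def wV (X : Fin q → ℝ) (ω : Ext q) : Ext q := ∑ i, X i • wB i ω

/-- Interior product with the vector `X ∈ V`. -/
def iV (X : Fin q → ℝ) (ω : Ext q) : Ext q := ∑ i, X i • iB i ω

/-- Clifford multiplication `X · ω = X ∧ ω − X ⌟ ω` of a vector with a form. -/
def clV (X : Fin q → ℝ) (ω : Ext q) : Ext q := wV X ω - iV X ω

/-- Clifford multiplication `e_{i₁} · e_{i₂} ⋯ e_{i_p} · ω` for `s = {i₁ < ⋯ < i_p}`. -/
def clB (s : Finset (Fin q)) (ω : Ext q) : Ext q :=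
  (Finset.sort s (· ≤ ·)).foldr (fun i τ => clV (eB i) τ) ω

/-- Clifford multiplication of two forms. -/
def clM (ω₁ ω₂ : Ext q) : Ext q := ∑ s : Finset (Fin q), ω₁ s • clB s ω₂

/-- The bracket `[ω₁, ω₂] = ω₁ · ω₂ − ω₂ · ω₁`. -/
def brkt (ω₁ ω₂ : Ext q) : Ext q := clM ω₁ ω₂ - clM ω₂ ω₁

/-- Exterior multiplication by the monomial `e_{i₁} ∧ ⋯ ∧ e_{i_p}`. -/
def wBs (s : Finset (Fin q)) (ω : Ext q) : Ext q :=
  (Finset.sort s (· ≤ ·)).foldr (fun i τ => wB i τ) ω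

/-- The wedge product of two forms. -/
def wM (ω₁ ω₂ : Ext q) : Ext q := ∑ s : Finset (Fin q), ω₁ s • wBs s ω₂

/-- The inner product on forms, for which the basis monomials are orthonormal. -/
def ip (ω φ : Ext q) : ℝ := ∑ s : Finset (Fin q), ω s * φ s

/-- `ω` is a form of (pure) degree `p`. -/
def homog (p : ℕ) (ω : Ext q) : Prop := ∀ s : Finset (Fin q), s.card ≠ p → ω s = 0

/-- The inner product of two vectors of `V = ℝ^q`. -/
def dotP (X Y : Fin q → ℝ) : ℝ := ∑ i, X i * Y i

/-- A vector of `V` regarded as a 1-form. -/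
def oneF (X : Fin q → ℝ) : Ext q := ∑ i, X i • bF {i}

/-- The wedge `X ∧ Y` of two vectors. -/
def w2 (X Y : Fin q → ℝ) : Ext q := wV X (oneF Y)

/-- Two-element subsets, indexing the canonical orthonormal basis of `Λ²V`. -/
def twoSets (q : ℕ) : Finset (Finset (Fin q)) := Finset.univ.filter fun s => s.card = 2

/-- The Bochner operator quadratic form `⟨B_R^{[p]} ω, φ⟩ =
(1/4) Σ_{r,s} ⟨R ψ_r, ψ_s⟩ ⟨[ψ_r,ω],[ψ_s,φ]⟩`, computed in the canonical
orthonormal basis `{e_i ∧ e_j}_{i<j}` of `Λ²V`. -/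
def Bform (R : Ext q →ₗ[ℝ] Ext q) (ω φ : Ext q) : ℝ :=
  (1 / 4 : ℝ) * ∑ s ∈ twoSets q, ∑ t ∈ twoSets q,
    ip (R (bF s)) (bF t) * ip (brkt (bF s) ω) (brkt (bF t) φ)

/-! For `a ≠ c` the Clifford product `J = e_a · e_c` satisfies `J² = -1`, and `e_s · J = ±J · e_s`
with sign `(-1)^|s ∩ {a, c}|`. Hence `[e_a ∧ e_c, ω] = J (ω - ω')`, where `ω'` flips the sign of the
components of `ω` containing exactly one of `e_a, e_c`, so the bracket vanishes iff those components
do. Since `θ^+ ± θ^-` and `ρ^+ ± ρ^-` are multiples of such basis 2-forms, every nonzero component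
of `ω` contains either all of `e_{2i-1}, e_{2i}, e_{2j-1}, e_{2j}` or none of them. Contracting all
four out of `ω` gives `ω₁`; the components containing none of them make up `ω₂`. -/

lemma sgn_insert (i k : Fin q) {B : Finset (Fin q)} (hk : k ∉ B) :
    sgn i (insert k B) = (if k < i then -1 else 1) * sgn i B := by
  unfold sgn
  rw [Finset.filter_insert]
  split_ifs
  · rw [Finset.card_insert_of_notMem (by simp [hk]), pow_succ, mul_comm]
  · rw [one_mul]

lemma sgn_mul_self (i : Fin q) (s : Finset (Fin q)) : sgn i s * sgn i s = 1 := by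
  rw [sgn, ← mul_pow]; norm_num

lemma sgn_eq_one_of_forall_lt {i : Fin q} {T : Finset (Fin q)} (h : ∀ j ∈ T, i < j) :
    sgn i T = 1 := by
  rw [sgn, Finset.filter_eq_empty_iff.mpr fun j hj => (h j hj).not_gt, Finset.card_empty,
    pow_zero]

lemma sgn_insert_mul_sgn {i k : Fin q} (hik : i ≠ k) {B : Finset (Fin q)} (hi : i ∉ B)
    (hk : k ∉ B) : sgn i (insert k B) * sgn k B = -(sgn k (insert i B) * sgn i B) := by
  rw [sgn_insert i k hk, sgn_insert k i hi]
  rcases hik.lt_or_gt with h | h <;> simp [h, h.not_gt] <;> ring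

lemma sgn_insert_mul_sgn_insert {i k : Fin q} (hik : i ≠ k) {B : Finset (Fin q)} (hi : i ∉ B)
    (hk : k ∉ B) : sgn i (insert k B) * sgn k (insert i B) = -(sgn k B * sgn i B) := by
  rw [sgn_insert i k hk, sgn_insert k i hi]
  rcases hik.lt_or_gt with h | h <;> simp [h, h.not_gt] <;> ring

lemma wB_apply_insert {i : Fin q} {B : Finset (Fin q)} (hi : i ∉ B) (ω : Ext q) :
    wB i ω (insert i B) = sgn i B * ω B := by
  simp [wB, Finset.erase_insert hi]

lemma iB_apply_of_notMem {i : Fin q} {s : Finset (Fin q)} (hi : i ∉ s) (ω : Ext q) :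
    iB i ω s = sgn i s * ω (insert i s) := by
  simp [iB, hi]

lemma exists_eq_insert_of_mem {i : Fin q} {s : Finset (Fin q)} (hi : i ∈ s) :
    ∃ B, i ∉ B ∧ s = insert i B :=
  ⟨s.erase i, by simp, (Finset.insert_erase hi).symm⟩

lemma exists_eq_insert_insert {i k : Fin q} (hik : i ≠ k) {s : Finset (Fin q)} (hi : i ∈ s)
    (hk : k ∈ s) : ∃ B, i ∉ B ∧ k ∉ B ∧ s = insert i (insert k B) :=
  ⟨(s.erase i).erase k, by simp, by simp, by
    rw [Finset.insert_erase (by simp [hk, hik.symm]), Finset.insert_erase hi]⟩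

lemma iB_eq_zero_of_forall_mem {i : Fin q} {ω : Ext q} (h : ∀ s, i ∈ s → ω s = 0) :
    iB i ω = 0 := by
  funext s
  by_cases hi : i ∈ s
  · simp [iB, hi]
  · simp [iB_apply_of_notMem hi, h _ (Finset.mem_insert_self i s)]

lemma homog_iB (i : Fin q) {n : ℕ} {ω : Ext q} (h : homog n ω) : homog (n - 1) (iB i ω) := by
  intro s hs
  by_cases hi : i ∈ s
  · simp [iB, hi]
  · rw [iB_apply_of_notMem hi, h _ (by rw [Finset.card_insert_of_notMem hi]; omega), mul_zero]

def wBₗ (i : Fin q) : Module.End ℝ (Ext q) where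
  toFun := wB i
  map_add' φ ψ := by funext s; simp only [wB, Pi.add_apply]; split_ifs <;> ring
  map_smul' r φ := by
    funext s; simp only [wB, Pi.smul_apply, smul_eq_mul, RingHom.id_apply]; split_ifs <;> ring

def iBₗ (i : Fin q) : Module.End ℝ (Ext q) where
  toFun := iB i
  map_add' φ ψ := by funext s; simp only [iB, Pi.add_apply]; split_ifs <;> ring
  map_smul' r φ := by
    funext s; simp only [iB, Pi.smul_apply, smul_eq_mul, RingHom.id_apply]; split_ifs <;> ring

@[simp] lemma wBₗ_apply (i : Fin q) (ω : Ext q) : wBₗ i ω = wB i ω := rfl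

@[simp] lemma iBₗ_apply (i : Fin q) (ω : Ext q) : iBₗ i ω = iB i ω := rfl

lemma wB_wB_self (i : Fin q) (ω : Ext q) : wB i (wB i ω) = 0 := by
  funext s; simp [wB]

lemma iB_iB_self (i : Fin q) (ω : Ext q) : iB i (iB i ω) = 0 := by
  funext s; simp [iB]

lemma wB_wB_comm (i k : Fin q) (ω : Ext q) : wB i (wB k ω) = -wB k (wB i ω) := by
  funext s
  rw [Pi.neg_apply]
  by_cases hik : i = k
  · subst hik; simp [wB_wB_self]
  by_cases hi : i ∈ s <;> by_cases hk : k ∈ s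
  · obtain ⟨B, hiB, hkB, rfl⟩ := exists_eq_insert_insert hik hi hk
    rw [wB_apply_insert (by simp [hik, hiB]), wB_apply_insert hkB, Finset.insert_comm,
      wB_apply_insert (by simp [Ne.symm hik, hkB]), wB_apply_insert hiB, ← mul_assoc,
      ← mul_assoc, sgn_insert_mul_sgn hik hiB hkB, neg_mul]
  all_goals simp [wB, hi, hk]

lemma iB_iB_comm (i k : Fin q) (ω : Ext q) : iB i (iB k ω) = -iB k (iB i ω) := by
  funext s
  rw [Pi.neg_apply]
  by_cases hik : i = k
  · subst hik; simp [iB_iB_self]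
  by_cases hi : i ∈ s
  · simp [iB, hi]
  by_cases hk : k ∈ s
  · simp [iB, hi, hk]
  rw [iB_apply_of_notMem hi, iB_apply_of_notMem (by simp [Ne.symm hik, hk]),
    iB_apply_of_notMem hk, iB_apply_of_notMem (by simp [hik, hi]), Finset.insert_comm]
  linear_combination ω (insert i (insert k s)) * sgn_insert_mul_sgn hik hi hk

lemma iB_wB_add_wB_iB_self (i : Fin q) (ω : Ext q) : iB i (wB i ω) + wB i (iB i ω) = ω := by
  funext s
  rw [Pi.add_apply]
  by_cases hi : i ∈ s
  · obtain ⟨B, hiB, rfl⟩ := exists_eq_insert_of_mem hi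
    rw [wB_apply_insert hiB, iB_apply_of_notMem hiB]
    simp only [iB, Finset.mem_insert_self, if_true, zero_add]
    linear_combination ω (insert i B) * sgn_mul_self i B
  · rw [iB_apply_of_notMem hi, wB_apply_insert hi]
    simp only [wB, hi, if_false, add_zero]
    linear_combination ω s * sgn_mul_self i s

lemma iB_wB_comm {i k : Fin q} (hik : i ≠ k) (ω : Ext q) : iB i (wB k ω) = -wB k (iB i ω) := by
  funext s
  rw [Pi.neg_apply]
  by_cases hi : i ∈ s
  · simp [iB, wB, hi, hik]
  by_cases hk : k ∈ s
  · obtain ⟨B, hkB, rfl⟩ := exists_eq_insert_of_mem hk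
    have hiB : i ∉ B := fun h => hi (Finset.mem_insert_of_mem h)
    rw [iB_apply_of_notMem hi, Finset.insert_comm, wB_apply_insert (by simp [Ne.symm hik, hkB]),
      wB_apply_insert hkB, iB_apply_of_notMem hiB]
    linear_combination ω (insert i B) * sgn_insert_mul_sgn_insert hik hiB hkB
  · simp [iB, wB, hi, hk, Ne.symm hik]

def clₗ (i : Fin q) : Module.End ℝ (Ext q) := wBₗ i - iBₗ i

lemma wV_eB (i : Fin q) (ω : Ext q) : wV (eB i) ω = wB i ω := by
  simp [wV, eB, Pi.single_apply]

lemma iV_eB (i : Fin q) (ω : Ext q) : iV (eB i) ω = iB i ω := by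
  simp [iV, eB, Pi.single_apply]

lemma clV_eB (i : Fin q) (ω : Ext q) : clV (eB i) ω = clₗ i ω := by
  rw [clV, wV_eB, iV_eB]
  rfl

lemma clₗ_clₗ_self (i : Fin q) (ω : Ext q) : clₗ i (clₗ i ω) = -ω := by
  simp only [clₗ, LinearMap.sub_apply, map_sub, wBₗ_apply, iBₗ_apply]
  linear_combination wB_wB_self i ω + iB_iB_self i ω - iB_wB_add_wB_iB_self i ω

lemma clₗ_clₗ_comm {i k : Fin q} (hik : i ≠ k) (ω : Ext q) :
    clₗ i (clₗ k ω) = -clₗ k (clₗ i ω) := by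
  simp only [clₗ, LinearMap.sub_apply, map_sub, wBₗ_apply, iBₗ_apply]
  linear_combination wB_wB_comm i k ω + iB_iB_comm i k ω - iB_wB_comm hik ω -
    iB_wB_comm (Ne.symm hik) ω

lemma clₗ_clₗ_clₗ_of_eq {a c x : Fin q} (hac : a ≠ c) (hx : x = a ∨ x = c) (ω : Ext q) :
    clₗ x (clₗ a (clₗ c ω)) = -clₗ a (clₗ c (clₗ x ω)) := by
  rcases hx with rfl | rfl
  · rw [clₗ_clₗ_self, clₗ_clₗ_comm hac.symm, map_neg, clₗ_clₗ_self, neg_neg]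
  · rw [clₗ_clₗ_comm hac.symm]

lemma clₗ_clₗ_clₗ_of_ne {a c x : Fin q} (hxa : x ≠ a) (hxc : x ≠ c) (ω : Ext q) :
    clₗ x (clₗ a (clₗ c ω)) = clₗ a (clₗ c (clₗ x ω)) := by
  rw [clₗ_clₗ_comm hxa, clₗ_clₗ_comm hxc, map_neg, neg_neg]

lemma prod_clₗ_clₗ_clₗ {a c : Fin q} (hac : a ≠ c) (l : List (Fin q)) (ω : Ext q) :
    (l.map clₗ).prod (clₗ a (clₗ c ω)) =
      (-1 : ℝ) ^ l.countP (fun x => x = a ∨ x = c) • clₗ a (clₗ c ((l.map clₗ).prod ω)) := by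
  induction l with
  | nil => simp
  | cons x l ih =>
    rw [List.map_cons, List.prod_cons, Module.End.mul_apply, Module.End.mul_apply, ih, map_smul,
      List.countP_cons]
    by_cases hx : x = a ∨ x = c
    · rw [clₗ_clₗ_clₗ_of_eq hac hx]
      simp [hx, pow_succ]
    · rw [not_or] at hx
      rw [clₗ_clₗ_clₗ_of_ne hx.1 hx.2]
      simp [hx]

lemma clB_eq_prod (s : Finset (Fin q)) (ω : Ext q) :
    clB s ω = ((s.sort (· ≤ ·)).map clₗ).prod ω := by
  simp only [clB, clV_eB]
  induction s.sort (· ≤ ·) with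
  | nil => rfl
  | cons x l ih =>
    simp only [List.foldr_cons, ih, List.map_cons, List.prod_cons, Module.End.mul_apply]

lemma sum_smul_bF (ω : Ext q) : ∑ s, ω s • bF s = ω := by
  funext t
  simp [bF]

lemma wB_bF_of_forall_lt {i : Fin q} {T : Finset (Fin q)} (h : ∀ j ∈ T, i < j) :
    wB i (bF T) = bF (insert i T) := by
  have hiT : i ∉ T := fun hi => lt_irrefl i (h i hi)
  funext s
  by_cases hi : i ∈ s
  · obtain ⟨B, hiB, rfl⟩ := exists_eq_insert_of_mem hi
    rw [wB_apply_insert hiB]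
    by_cases hBT : B = T
    · subst hBT; simp [bF, sgn_eq_one_of_forall_lt h]
    · have hne : insert i B ≠ insert i T := fun he =>
        hBT (by rw [← Finset.erase_insert hiB, he, Finset.erase_insert hiT])
      simp [bF, hBT, hne]
  · have hne : s ≠ insert i T := fun he => hi (he ▸ Finset.mem_insert_self i T)
    simp [wB, bF, hi, hne]

lemma iB_bF_of_notMem {i : Fin q} {T : Finset (Fin q)} (h : i ∉ T) : iB i (bF T) = 0 :=
  iB_eq_zero_of_forall_mem fun s hs => if_neg (by rintro rfl; exact h hs)

lemma clₗ_bF_of_forall_lt {i : Fin q} {T : Finset (Fin q)} (h : ∀ j ∈ T, i < j) :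
    clₗ i (bF T) = bF (insert i T) := by
  simp [clₗ, wB_bF_of_forall_lt h, iB_bF_of_notMem fun hi => lt_irrefl i (h i hi)]

lemma prod_clₗ_bF_empty {l : List (Fin q)} (hl : l.Pairwise (· < ·)) :
    (l.map clₗ).prod (bF ∅) = bF l.toFinset := by
  induction l with
  | nil => rfl
  | cons x l ih =>
    rw [List.pairwise_cons] at hl
    rw [List.map_cons, List.prod_cons, Module.End.mul_apply, ih hl.2, List.toFinset_cons,
      clₗ_bF_of_forall_lt fun j hj => hl.1 j (List.mem_toFinset.mp hj)]

lemma clB_bF_empty (s : Finset (Fin q)) : clB s (bF ∅) = bF s := by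
  rw [clB_eq_prod, prod_clₗ_bF_empty (Finset.sortedLT_sort s).pairwise, Finset.sort_toFinset]

lemma clB_pair {a c : Fin q} (hac : a < c) (ω : Ext q) : clB {a, c} ω = clₗ a (clₗ c ω) := by
  rw [clB_eq_prod, Finset.sort_insert (r := (· ≤ ·)) (s := {c}) (by simpa using hac.le)
    (by simpa using hac.ne), Finset.sort_singleton]
  rfl

lemma bF_pair {a c : Fin q} (hac : a < c) : bF {a, c} = clₗ a (clₗ c (bF ∅)) := by
  rw [← clB_pair hac, clB_bF_empty]

lemma clB_bF_pair {a c : Fin q} (hac : a < c) (s : Finset (Fin q)) :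
    clB s (bF {a, c}) =
      (-1 : ℝ) ^ (s.filter fun x => x = a ∨ x = c).card • clₗ a (clₗ c (bF s)) := by
  rw [bF_pair hac, clB_eq_prod, prod_clₗ_clₗ_clₗ hac.ne, ← clB_eq_prod, clB_bF_empty,
    ← (Finset.sort_nodup s _).card_eq_countP, Finset.sort_toFinset]

lemma clM_bF_left (s : Finset (Fin q)) (ω : Ext q) : clM (bF s) ω = clB s ω := by
  simp [clM, bF]

lemma clM_bF_pair_right {a c : Fin q} (hac : a < c) (ω : Ext q) :
    clM ω (bF {a, c}) =
      clₗ a (clₗ c fun s => (-1 : ℝ) ^ (s.filter fun x => x = a ∨ x = c).card * ω s) := by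
  rw [← sum_smul_bF fun s => (-1 : ℝ) ^ (s.filter fun x => x = a ∨ x = c).card * ω s]
  simp only [clM, clB_bF_pair hac, map_sum, map_smul, smul_smul, mul_comm]

lemma Submodule.mem_of_smul_add_mem_of_smul_sub_mem {𝕜 M : Type*} [Field 𝕜] [NeZero (2 : 𝕜)]
    [AddCommGroup M] [Module 𝕜 M] {K : Submodule 𝕜 M} {c : 𝕜} (hc : c ≠ 0) {x y : M}
    (hadd : c • (x + y) ∈ K) (hsub : c • (x - y) ∈ K) : x ∈ K ∧ y ∈ K := by
  rw [Submodule.smul_mem_iff K hc] at hadd hsub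
  have hx : x ∈ K := by
    rw [← Submodule.smul_mem_iff K (two_ne_zero : (2 : 𝕜) ≠ 0), two_smul]
    simpa using K.add_mem hadd hsub
  exact ⟨hx, by simpa using K.sub_mem hadd hx⟩

def brktLeft (ω : Ext q) : Ext q →ₗ[ℝ] Ext q where
  toFun x := brkt x ω
  map_add' x y := by
    simp only [brkt, clM, Pi.add_apply, add_smul, clB_eq_prod, map_add, smul_add,
      Finset.sum_add_distrib]
    abel
  map_smul' r x := by
    simp only [brkt, clM, Pi.smul_apply, clB_eq_prod, map_smul, smul_eq_mul, mul_smul,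
      smul_comm (ω _) r, ← Finset.smul_sum, RingHom.id_apply, smul_sub]

lemma w2_eB_eB {a c : Fin q} (hac : a < c) : w2 (eB a) (eB c) = bF {a, c} := by
  have hone : oneF (eB c) = bF {c} := by simp [oneF, eB, Pi.single_apply]
  rw [w2, hone, wV_eB, wB_bF_of_forall_lt (by simpa using hac)]

lemma clₗ_clₗ_clₗ_clₗ {a c : Fin q} (hac : a ≠ c) (ω : Ext q) :
    clₗ a (clₗ c (clₗ a (clₗ c ω))) = -ω := by
  rw [clₗ_clₗ_comm hac.symm, map_neg, clₗ_clₗ_self, clₗ_clₗ_self, neg_neg]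

lemma mem_iff_mem_of_brkt_bF_pair_eq_zero {a c : Fin q} (hac : a < c) {ω : Ext q}
    (h : brkt (bF {a, c}) ω = 0) {s : Finset (Fin q)} (hs : ω s ≠ 0) : a ∈ s ↔ c ∈ s := by
  set ω' : Ext q := fun s => (-1 : ℝ) ^ (s.filter fun x => x = a ∨ x = c).card * ω s
  have hJ : clₗ a (clₗ c (ω - ω')) = 0 := by
    rwa [brkt, clM_bF_left, clB_pair hac, clM_bF_pair_right hac, ← map_sub, ← map_sub] at h
  have hfix : ω = ω' := by
    rw [← sub_eq_zero, ← neg_eq_zero, ← clₗ_clₗ_clₗ_clₗ hac.ne, hJ, map_zero, map_zero]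
  by_contra hxor
  have hcard : (s.filter fun x => x = a ∨ x = c).card = 1 := by
    by_cases ha : a ∈ s <;> simp [Finset.filter_or, Finset.filter_eq', ha] at hxor ⊢ <;> simp [hxor]
  have := congrFun hfix s
  simp only [ω', hcard, pow_one, neg_one_mul] at this
  exact hs (by linarith)

lemma wB_neg (i : Fin q) (ω : Ext q) : wB i (-ω) = -wB i ω := map_neg (wBₗ i) ω

lemma wB_iB_self_apply (i : Fin q) (ω : Ext q) (s : Finset (Fin q)) :
    wB i (iB i ω) s = if i ∈ s then ω s else 0 := by
  by_cases hi : i ∈ s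
  · obtain ⟨B, hiB, rfl⟩ := exists_eq_insert_of_mem hi
    rw [wB_apply_insert hiB, iB_apply_of_notMem hiB, ← mul_assoc, sgn_mul_self, one_mul,
      if_pos hi]
  · simp [wB, hi]

lemma wB_iB_self_iB_comm {i k : Fin q} (hik : i ≠ k) (ω : Ext q) :
    wB i (iB i (iB k ω)) = iB k (wB i (iB i ω)) := by
  rw [iB_iB_comm, wB_neg, iB_wB_comm hik.symm]

lemma iB_iB_eq_zero_of_iB_eq_zero {i : Fin q} {ω : Ext q} (h : iB i ω = 0) (k : Fin q) :
    iB i (iB k ω) = 0 := by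
  rw [iB_iB_comm, h, ← iBₗ_apply, map_zero, neg_zero]

lemma exists_eq_wB_wB_wB_wB_add {a₁ a₂ c₁ c₂ : Fin q} (hne : [a₁, a₂, c₁, c₂].Nodup) {p : ℕ}
    {ω : Ext q} (hω : homog p ω)
    (hblock : ∀ s, ω s ≠ 0 → (a₁ ∈ s ↔ a₂ ∈ s) ∧ (a₂ ∈ s ↔ c₁ ∈ s) ∧ (c₁ ∈ s ↔ c₂ ∈ s)) :
    ∃ ω₁ ω₂ : Ext q, homog (p - 4) ω₁ ∧ homog p ω₂ ∧
      iB a₁ ω₁ = 0 ∧ iB a₂ ω₁ = 0 ∧ iB c₁ ω₁ = 0 ∧ iB c₂ ω₁ = 0 ∧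
      iB a₁ ω₂ = 0 ∧ iB a₂ ω₂ = 0 ∧ iB c₁ ω₂ = 0 ∧ iB c₂ ω₂ = 0 ∧
      ω = wB a₁ (wB a₂ (wB c₁ (wB c₂ ω₁))) + ω₂ := by
  simp only [List.nodup_cons, List.mem_cons, List.not_mem_nil, not_or, or_false] at hne
  obtain ⟨⟨h₁₂, h₁₃, h₁₄⟩, ⟨h₂₃, h₂₄⟩, h₃₄, -⟩ := hne
  set ω₁ := iB c₂ (iB c₁ (iB a₂ (iB a₁ ω)))
  set W := wB a₁ (wB a₂ (wB c₁ (wB c₂ ω₁)))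
  have hW : ∀ s, W s = if a₁ ∈ s ∧ a₂ ∈ s ∧ c₁ ∈ s ∧ c₂ ∈ s then ω s else 0 := by
    intro s
    simp only [W, ω₁, wB_iB_self_iB_comm (Ne.symm h₁₂), wB_iB_self_iB_comm (Ne.symm h₁₃),
      wB_iB_self_iB_comm (Ne.symm h₁₄), wB_iB_self_iB_comm (Ne.symm h₂₃),
      wB_iB_self_iB_comm (Ne.symm h₂₄), wB_iB_self_iB_comm (Ne.symm h₃₄), wB_iB_self_apply, ite_and]
  have hW_sub : ∀ s, (a₁ ∈ s ∨ a₂ ∈ s ∨ c₁ ∈ s ∨ c₂ ∈ s) → (ω - W) s = 0 := by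
    intro s hs
    rw [Pi.sub_apply, hW]
    split_ifs with hall
    · exact sub_self _
    · rw [sub_zero]
      by_contra hωs
      exact hall (by have := hblock s hωs; tauto)
  refine ⟨ω₁, ω - W, ?_, ?_, ?_, ?_, ?_, ?_, ?_, ?_, ?_, ?_, (add_sub_cancel W ω).symm⟩
  · simpa [Nat.sub_sub] using homog_iB c₂ (homog_iB c₁ (homog_iB a₂ (homog_iB a₁ hω)))
  · intro s hs
    simp [hW, hω s hs]
  · exact iB_iB_eq_zero_of_iB_eq_zero
      (iB_iB_eq_zero_of_iB_eq_zero (iB_iB_eq_zero_of_iB_eq_zero (iB_iB_self a₁ ω) a₂) c₁) c₂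
  · exact iB_iB_eq_zero_of_iB_eq_zero (iB_iB_eq_zero_of_iB_eq_zero (iB_iB_self _ _) c₁) c₂
  · exact iB_iB_eq_zero_of_iB_eq_zero (iB_iB_self _ _) c₂
  · exact iB_iB_self _ _
  all_goals exact iB_eq_zero_of_forall_mem fun s hs => hW_sub s (by tauto)

/-- Indices are shifted: the paper's `e_k` is `eB` at the index `k − 1`. -/
theorem statement_12_general (q p : ℕ) (i j : ℕ) (hi : 1 ≤ i) (hij : i < j)
    (a1 a2 c1 c2 : Fin q)
    (ha1 : (a1 : ℕ) = 2 * i - 2) (ha2 : (a2 : ℕ) = 2 * i - 1)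
    (hc1 : (c1 : ℕ) = 2 * j - 2) (hc2 : (c2 : ℕ) = 2 * j - 1)
    (θp θm ρp ρm : Ext q)
    (hθp : θp = (Real.sqrt 2)⁻¹ • (w2 (eB a1) (eB c1) + w2 (eB a2) (eB c2)))
    (hθm : θm = (Real.sqrt 2)⁻¹ • (w2 (eB a1) (eB c1) - w2 (eB a2) (eB c2)))
    (hρp : ρp = (Real.sqrt 2)⁻¹ • (w2 (eB a1) (eB c2) + w2 (eB a2) (eB c1)))
    (hρm : ρm = (Real.sqrt 2)⁻¹ • (w2 (eB a1) (eB c2) - w2 (eB a2) (eB c1)))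
    (ω : Ext q) (hω : homog p ω)
    (h1 : brkt θp ω = 0) (h2 : brkt θm ω = 0) (h3 : brkt ρp ω = 0) (h4 : brkt ρm ω = 0) :
    ∃ ω₁ ω₂ : Ext q, homog (p - 4) ω₁ ∧ homog p ω₂ ∧
      iB a1 ω₁ = 0 ∧ iB a2 ω₁ = 0 ∧ iB c1 ω₁ = 0 ∧ iB c2 ω₁ = 0 ∧
      iB a1 ω₂ = 0 ∧ iB a2 ω₂ = 0 ∧ iB c1 ω₂ = 0 ∧ iB c2 ω₂ = 0 ∧
      ω = wB a1 (wB a2 (wB c1 (wB c2 ω₁))) + ω₂ := by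
  subst hθp hθm hρp hρm
  have h11 : a1 < c1 := by rw [Fin.lt_def]; omega
  have h12 : a1 < c2 := by rw [Fin.lt_def]; omega
  have h21 : a2 < c1 := by rw [Fin.lt_def]; omega
  have hc : (Real.sqrt 2)⁻¹ ≠ 0 := by positivity
  obtain ⟨hθ, -⟩ := Submodule.mem_of_smul_add_mem_of_smul_sub_mem
    (K := LinearMap.ker (brktLeft ω)) hc h1 h2
  obtain ⟨hρ₁, hρ₂⟩ := Submodule.mem_of_smul_add_mem_of_smul_sub_mem
    (K := LinearMap.ker (brktLeft ω)) hc h3 h4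
  rw [LinearMap.mem_ker, w2_eB_eB h11] at hθ
  rw [LinearMap.mem_ker, w2_eB_eB h12] at hρ₁
  rw [LinearMap.mem_ker, w2_eB_eB h21] at hρ₂
  refine exists_eq_wB_wB_wB_wB_add (by simp [Fin.ext_iff]; omega) hω fun s hs => ?_
  have e11 := mem_iff_mem_of_brkt_bF_pair_eq_zero h11 hθ hs
  have e12 := mem_iff_mem_of_brkt_bF_pair_eq_zero h12 hρ₁ hs
  have e21 := mem_iff_mem_of_brkt_bF_pair_eq_zero h21 hρ₂ hs
  exact ⟨e11.trans e21.symm, e21, e11.symm.trans e12⟩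

/-- Lemma 4.7 of the paper. If a `p`-form `ω` satisfies
`[θ_{ij}^±, ω] = [ρ_{ij}^±, ω] = 0`, then `ω = e_{2i−1}∧e_{2i}∧e_{2j−1}∧e_{2j}∧ω₁ + ω₂`
where `ω₁, ω₂` are annihilated by contraction with `e_{2i−1}, e_{2i}, e_{2j−1}, e_{2j}`.
(Indices are shifted: paper's `e_k` is the basis vector with `(· : ℕ) = k − 1`.) -/
theorem statement_12 (q p : ℕ) (i j : ℕ) (hi : 1 ≤ i) (hij : i < j) (hjq : 2 * j ≤ q)
    (a1 a2 c1 c2 : Fin q)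
    (ha1 : (a1 : ℕ) = 2 * i - 2) (ha2 : (a2 : ℕ) = 2 * i - 1)
    (hc1 : (c1 : ℕ) = 2 * j - 2) (hc2 : (c2 : ℕ) = 2 * j - 1)
    (θp θm ρp ρm : Ext q)
    (hθp : θp = (Real.sqrt 2)⁻¹ • (w2 (eB a1) (eB c1) + w2 (eB a2) (eB c2)))
    (hθm : θm = (Real.sqrt 2)⁻¹ • (w2 (eB a1) (eB c1) - w2 (eB a2) (eB c2)))
    (hρp : ρp = (Real.sqrt 2)⁻¹ • (w2 (eB a1) (eB c2) + w2 (eB a2) (eB c1)))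
    (hρm : ρm = (Real.sqrt 2)⁻¹ • (w2 (eB a1) (eB c2) - w2 (eB a2) (eB c1)))
    (ω : Ext q) (hω : homog p ω)
    (h1 : brkt θp ω = 0) (h2 : brkt θm ω = 0) (h3 : brkt ρp ω = 0) (h4 : brkt ρm ω = 0) :
    ∃ ω₁ ω₂ : Ext q, homog (p - 4) ω₁ ∧ homog p ω₂ ∧
      iB a1 ω₁ = 0 ∧ iB a2 ω₁ = 0 ∧ iB c1 ω₁ = 0 ∧ iB c2 ω₁ = 0 ∧
      iB a1 ω₂ = 0 ∧ iB a2 ω₂ = 0 ∧ iB c1 ω₂ = 0 ∧ iB c2 ω₂ = 0 ∧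
      ω = wB a1 (wB a2 (wB c1 (wB c2 ω₁))) + ω₂ :=
  statement_12_general q p i j hi hij a1 a2 c1 c2 ha1 ha2 hc1 hc2 θp θm ρp ρm hθp hθm hρp hρm ω hω
    h1 h2 h3 h4

end
end Paper
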